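/- Consider the first-type surface S₁ (ε = −1) and suppose f(u) = u for all u ∈ J (so α²u² − β²g(u)² < 0 on J) and β²g(u) + α²u g'(u) ≠ 0 for all u ∈ J. Then S₁ is weighted flat (K_φ ≡ 0 on J) if and only if for all u ∈ J: d/du[arctan(g'(u))] = A₃(u), where A₃(u) = (−2δ(α²u² − β²g(u)²)²(1 + g'(u)²) + α²β²(g(u) − u g'(u))²) / ((β²g(u)² − α²u²)(β²g(u) + α²u g'(u))). -/

import Mathlib

open Real Set

/-- Weighted Gaussian curvature of the timelike general rotational surface `S_i`
(`ε = -1` for the first type, `ε = 1` for the second type) in `E₁⁴` with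
density `e^{λ₁x²+λ₂y²+λ₃z²+λ₄t²}`, where `δ = λ₁+λ₂+λ₃−λ₄`. -/
noncomputable def Kphi (α β δ ε : ℝ) (f g : ℝ → ℝ) (u : ℝ) : ℝ :=
  (-2 * δ * (α ^ 2 * (f u) ^ 2 + ε * β ^ 2 * (g u) ^ 2) ^ 2
      * (-ε * (deriv f u) ^ 2 + (deriv g u) ^ 2) ^ 2
    + α ^ 2 * β ^ 2 * (g u * deriv f u - f u * deriv g u) ^ 2
      * (-ε * (deriv f u) ^ 2 + (deriv g u) ^ 2)
    + (ε * α ^ 2 * (f u) ^ 2 + β ^ 2 * (g u) ^ 2)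
      * (β ^ 2 * g u * deriv f u + α ^ 2 * f u * deriv g u)
      * (deriv (deriv f) u * deriv g u - deriv f u * deriv (deriv g) u))
  / ((α ^ 2 * (f u) ^ 2 + ε * β ^ 2 * (g u) ^ 2) ^ 2
      * (-ε * (deriv f u) ^ 2 + (deriv g u) ^ 2) ^ 2)


theorem first_type_f_id_weighted_flat_iff
    (J : Set ℝ) (hJo : IsOpen J) (hJc : J.OrdConnected)
    (f g : ℝ → ℝ) (hfu : ∀ u, f u = u)
    (hg : ContDiffOn ℝ (⊤ : ℕ∞) g J)
    (α β l1 l2 l3 l4 δ : ℝ) (hα : 0 < α) (hβ : 0 < β)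
    (hl : ¬(l1 = 0 ∧ l2 = 0 ∧ l3 = 0 ∧ l4 = 0)) (hδ : δ = l1 + l2 + l3 - l4)
    (hreg : ∀ u ∈ J, 0 < (deriv f u) ^ 2 + (deriv g u) ^ 2
        ∧ α ^ 2 * (f u) ^ 2 - β ^ 2 * (g u) ^ 2 < 0)
    (hden : ∀ u ∈ J, β ^ 2 * g u + α ^ 2 * u * deriv g u ≠ 0) :
    (∀ u ∈ J, Kphi α β δ (-1) f g u = 0) ↔
      (∀ u ∈ J, deriv (fun x => Real.arctan (deriv g x)) u
        = (-2 * δ * (α ^ 2 * u ^ 2 - β ^ 2 * (g u) ^ 2) ^ 2 * (1 + (deriv g u) ^ 2)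
            + α ^ 2 * β ^ 2 * (g u - u * deriv g u) ^ 2)
          / ((β ^ 2 * (g u) ^ 2 - α ^ 2 * u ^ 2) * (β ^ 2 * g u + α ^ 2 * u * deriv g u))) := by
  have hf : f = fun x => x := funext hfu
  have hdf : deriv f = fun _ => (1 : ℝ) := by rw [hf]; funext x; simp
  have hddf : deriv (deriv f) = fun _ => (0 : ℝ) := by rw [hdf]; funext x; simp
  have hgd : DifferentiableOn ℝ (deriv g) J :=
    (((contDiffOn_infty_iff_deriv_of_isOpen hJo).1 hg).2).differentiableOn (by simp)
  apply forall₂_congr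
  intro u hu
  have hDlt : α ^ 2 * u ^ 2 - β ^ 2 * (g u) ^ 2 < 0 := by
    have := (hreg u hu).2; rwa [hfu u] at this
  have hE : β ^ 2 * g u + α ^ 2 * u * deriv g u ≠ 0 := hden u hu
  have hP : (0 : ℝ) < 1 + (deriv g u) ^ 2 := by positivity
  have hdgu : DifferentiableAt ℝ (deriv g) u :=
    hgd.differentiableAt (hJo.mem_nhds hu)
  have harc : deriv (fun x => Real.arctan (deriv g x)) u
      = (1 / (1 + (deriv g u) ^ 2)) * deriv (deriv g) u :=
    ((Real.hasDerivAt_arctan (deriv g u)).comp u hdgu.hasDerivAt).deriv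
  have hDne : α ^ 2 * u ^ 2 - β ^ 2 * (g u) ^ 2 ≠ 0 := ne_of_lt hDlt
  have hD'ne : β ^ 2 * (g u) ^ 2 - α ^ 2 * u ^ 2 ≠ 0 := by
    intro h; apply hDne; linarith
  rw [harc]
  simp only [Kphi, hddf, hdf, hfu u, deriv_const']
  have key : ∀ N D : ℝ, D ≠ 0 → (N / D = 0 ↔ N = 0) :=
    fun N D hD => div_eq_zero_iff.trans (or_iff_left hD)
  have hden2 : ((α ^ 2 * u ^ 2 + (-1 : ℝ) * β ^ 2 * (g u) ^ 2) ^ 2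
      * (-(-1 : ℝ) * (1 : ℝ) ^ 2 + (deriv g u) ^ 2) ^ 2) ≠ 0 := by
    have h1 : (α ^ 2 * u ^ 2 + (-1 : ℝ) * β ^ 2 * (g u) ^ 2) ≠ 0 := by
      intro h; apply hDne; linarith
    have h2 : (-(-1 : ℝ) * (1 : ℝ) ^ 2 + (deriv g u) ^ 2) ≠ 0 := by
      intro h; nlinarith
    positivity
  rw [key _ _ hden2, one_div_mul_eq_div,
    div_eq_div_iff hP.ne' (mul_ne_zero hD'ne hE)]
  constructor <;> intro h <;> linear_combination -h
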